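/- arXiv:2106.11661 — 5 statements merged into one kernel-verified Lean document; each statement's English description precedes it below -/
import Mathlib

section
/- Let d ≥ 2 be an integer and α, β ∈ ℂ with |α| = 1. If α^{d^n(d+1)} → β as n → ∞, then β^{d-1} = 1. -/
open Filter Topology

theorem pow_eq_self_of_tendsto_of_pow_succ {M : Type*} [Monoid M] [TopologicalSpace M]
    [ContinuousMul M] [T2Space M] {u : ℕ → M} {β : M} (d : ℕ) (hu : ∀ n, u (n + 1) = u n ^ d)
    (h : Tendsto u atTop (𝓝 β)) : β ^ d = β := by
  have hshift : Tendsto (fun n => u n ^ d) atTop (𝓝 β) := by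
    simpa only [hu] using (tendsto_add_atTop_iff_nat 1).mpr h
  exact tendsto_nhds_unique (h.pow d) hshift

theorem pow_sub_one_eq_one_of_pow_eq_self {M₀ : Type*} [MonoidWithZero M₀]
    [IsLeftCancelMulZero M₀] {β : M₀} {d : ℕ} (hβ : β ≠ 0) (h : β ^ d = β) : β ^ (d - 1) = 1 := by
  cases d with
  | zero => exact pow_zero β
  | succ d => exact mul_left_cancel₀ hβ (by rwa [← pow_succ', mul_one])

theorem stmt1_general (d : ℕ) (α β : ℂ) (hα : ‖α‖ = 1)
    (h : Filter.Tendsto (fun n : ℕ => α ^ (d ^ n * (d + 1))) Filter.atTop (nhds β)) :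
    β ^ (d - 1) = 1 := by
  have hβ : β ∈ Metric.sphere 0 1 :=
    Metric.isClosed_sphere.mem_of_tendsto h (Eventually.of_forall fun n => by simp [hα])
  refine pow_sub_one_eq_one_of_pow_eq_self (ne_zero_of_mem_unit_sphere ⟨β, hβ⟩) ?_
  exact pow_eq_self_of_tendsto_of_pow_succ d (fun n => by rw [← pow_mul]; ring) h

/-- If |α| = 1 and α^{d^n(d+1)} → β, then β^{d-1} = 1. -/
theorem stmt1 (d : ℕ) (hd : 2 ≤ d) (α β : ℂ) (hα : ‖α‖ = 1)
    (h : Filter.Tendsto (fun n : ℕ => α ^ (d ^ n * (d + 1))) Filter.atTop (nhds β)) :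
    β ^ (d - 1) = 1 :=
  stmt1_general d α β hα h
end

section
/- Let H(x,y) = (y, p_H(y) − δ_H x) and F(x,y) = (y, p_F(y) − δ_F x) be Hénon maps with p_H, p_F monic centered polynomials of degree d ≥ 2 over ℂ and δ_H, δ_F ≠ 0. Suppose α, β, γ ∈ ℂ satisfy α^{d+1} = β, β^{d-1} = 1, γ^{d-1} = 1, α·p_F(αy) = β·p_H(y) for all y, and δ_F = γ·δ_H. Define B(x,y) = (γαβ^{-1}x, α^{-1}y) and L(x,y) = (γ^{-1}β x, β y). Then F = L ∘ B ∘ H ∘ B as maps ℂ² → ℂ². -/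
/-!
Since `L ∘ B` is the diagonal map `(x, y) ↦ (α x, (β / α) y)`, the composite `L ∘ B ∘ H ∘ B` sends
`(x, y)` to `(y, (β / α) p_H(y / α) - γ δ_H x)`, and the relation `α p_F(α y) = β p_H(y)` taken at
`y / α` turns this into `F(x, y)`.
-/

variable {K : Type*} [Field K]

def henonMap (p : K → K) (δ : K) (q : K × K) : K × K := (q.2, p q.2 - δ * q.1)

def diagMap (a b : K) (q : K × K) : K × K := (a * q.1, b * q.2)

lemma diagMap_comp_diagMap (a b c e : K) : diagMap a b ∘ diagMap c e = diagMap (a * c) (b * e) := by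
  funext q
  simp only [Function.comp_apply, diagMap, mul_assoc]

lemma diagMap_comp_henonMap_comp_diagMap {p q : K → K} {δ α β γ : K} (hα : α ≠ 0) (hβ : β ≠ 0)
    (hpq : ∀ y, α * q (α * y) = β * p y) :
    diagMap α (β / α) ∘ henonMap p δ ∘ diagMap (γ * α * β⁻¹) α⁻¹ = henonMap q (γ * δ) := by
  funext ⟨x, y⟩
  have hq : β * p (y / α) = α * q y := by
    rw [← hpq, mul_div_cancel₀ y hα]
  simp only [Function.comp_apply, diagMap, henonMap, Prod.mk.injEq]
  constructor
  · field_simp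
  · field_simp
    linear_combination hq

theorem stmt7_general (d : ℕ) (hd : 2 ≤ d) (δH δF α β γ : ℂ)
    (pH pF : ℂ → ℂ)
    (hαβ : α ^ (d + 1) = β) (hβ1 : β ^ (d - 1) = 1) (hγ1 : γ ^ (d - 1) = 1)
    (hp : ∀ y : ℂ, α * pF (α * y) = β * pH y) (hδ : δF = γ * δH)
    (H F B L : ℂ × ℂ → ℂ × ℂ)
    (hH : ∀ p : ℂ × ℂ, H p = (p.2, pH p.2 - δH * p.1))
    (hF : ∀ p : ℂ × ℂ, F p = (p.2, pF p.2 - δF * p.1))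
    (hB : ∀ p : ℂ × ℂ, B p = (γ * α * β⁻¹ * p.1, α⁻¹ * p.2))
    (hL : ∀ p : ℂ × ℂ, L p = (γ⁻¹ * β * p.1, β * p.2)) :
    F = L ∘ B ∘ H ∘ B := by
  have hβ : β ≠ 0 := (IsUnit.of_pow_eq_one hβ1 (by omega)).ne_zero
  have hγ : γ ≠ 0 := (IsUnit.of_pow_eq_one hγ1 (by omega)).ne_zero
  have hα : α ≠ 0 := by
    rintro rfl
    exact hβ (by rw [← hαβ, zero_pow d.succ_ne_zero])
  obtain rfl : H = henonMap pH δH := funext hH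
  obtain rfl : F = henonMap pF δF := funext hF
  obtain rfl : B = diagMap (γ * α * β⁻¹) α⁻¹ := funext hB
  obtain rfl : L = diagMap (γ⁻¹ * β) β := funext hL
  have hLB : diagMap (γ⁻¹ * β) β ∘ diagMap (γ * α * β⁻¹) α⁻¹ = diagMap α (β / α) := by
    rw [diagMap_comp_diagMap]
    congr 1
    field_simp
  rw [hδ, ← Function.comp_assoc, hLB, diagMap_comp_henonMap_comp_diagMap hα hβ hp]

/-- If α p_F(αy) = β p_H(y) and δ_F = γ δ_H with the root-of-unity relations,
    then F = L ∘ B ∘ H ∘ B. -/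
theorem stmt7 (d : ℕ) (hd : 2 ≤ d) (aH aF : ℕ → ℂ) (δH δF α β γ : ℂ)
    (hδH : δH ≠ 0) (hδF : δF ≠ 0)
    (pH pF : ℂ → ℂ)
    (hpH : ∀ y : ℂ, pH y = y ^ d + ∑ k ∈ Finset.Icc 2 d, aH (d - k) * y ^ (d - k))
    (hpF : ∀ y : ℂ, pF y = y ^ d + ∑ k ∈ Finset.Icc 2 d, aF (d - k) * y ^ (d - k))
    (hαβ : α ^ (d + 1) = β) (hβ1 : β ^ (d - 1) = 1) (hγ1 : γ ^ (d - 1) = 1)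
    (hp : ∀ y : ℂ, α * pF (α * y) = β * pH y) (hδ : δF = γ * δH)
    (H F B L : ℂ × ℂ → ℂ × ℂ)
    (hH : ∀ p : ℂ × ℂ, H p = (p.2, pH p.2 - δH * p.1))
    (hF : ∀ p : ℂ × ℂ, F p = (p.2, pF p.2 - δF * p.1))
    (hB : ∀ p : ℂ × ℂ, B p = (γ * α * β⁻¹ * p.1, α⁻¹ * p.2))
    (hL : ∀ p : ℂ × ℂ, L p = (γ⁻¹ * β * p.1, β * p.2)) :
    F = L ∘ B ∘ H ∘ B :=
  stmt7_general d hd δH δF α β γ pH pF hαβ hβ1 hγ1 hp hδ H F B L hH hF hB hL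
end

section
/- Let d ≥ 2, δ ≠ 0, and Q a complex polynomial of degree d+1. For n ≥ 0 and k ≥ 1 define γ_{k/d^n}(z, ζ) = (z + (d/δ)·Σ_{l=0}^{n-1} (d/δ)^l (Q(ζ^{d^l}) − Q((e^{2πik/d^n}ζ)^{d^l})), e^{2πik/d^n}ζ). Then γ_{k/d^n} is a well-defined biholomorphic self-map of ℂ × (ℂ∖D̄) with γ_{k/d^n} ∘ γ_{k'/d^{n'}} = γ_{(k/d^n + k'/d^{n'})}, i.e., these maps form a group isomorphic to Z[1/d]/ℤ. -/
/-!
Write `ε` for the root of unity `exp (2πik/dⁿ)` and `S_n(ε, ζ)` for the sum in the first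
coordinate. Since `εᵈⁿ = 1`, every term of `S_N(ε, ζ)` with `l ≥ n` vanishes, so `S_N(ε, ζ)` does
not depend on `N ≥ n`. Termwise, `S` is a cocycle for the rotation action:
`S_N(εε', ζ) = S_N(ε', ζ) + S_N(ε, ε'ζ)`. Computing both compositions with the common length
`N = n + n'` gives the group law, and the map of label `ε⁻¹` inverts the map of label `ε`.
-/

open Finset Polynomial

noncomputable section

namespace DeckTransformation

def labelRoot (d k n : ℕ) : ℂ :=
  Complex.exp (2 * Real.pi * Complex.I * k / (d : ℂ) ^ n)

def shift (c : ℂ) (d : ℕ) (Q : ℂ[X]) (n : ℕ) (ε ζ : ℂ) : ℂ :=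
  ∑ l ∈ range n, c ^ l * (Q.eval (ζ ^ d ^ l) - Q.eval ((ε * ζ) ^ d ^ l))

def deckMap (c : ℂ) (d : ℕ) (Q : ℂ[X]) (n : ℕ) (ε : ℂ) (p : ℂ × ℂ) : ℂ × ℂ :=
  (p.1 + c * shift c d Q n ε p.2, ε * p.2)

section labelRoot

variable {d : ℕ} (hd : d ≠ 0) (k n : ℕ)
include hd

theorem labelRoot_pow_eq_one : labelRoot d k n ^ d ^ n = 1 := by
  have hdn : (d : ℂ) ^ n ≠ 0 := pow_ne_zero _ (Nat.cast_ne_zero.mpr hd)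
  rw [labelRoot, ← Complex.exp_nat_mul, Nat.cast_pow, ← Complex.exp_int_mul_two_pi_mul_I k]
  congr 1
  field_simp
  push_cast
  ring

theorem labelRoot_mul (k' n' : ℕ) :
    labelRoot d k n * labelRoot d k' n' = labelRoot d (k * d ^ n' + k' * d ^ n) (n + n') := by
  have hd' : (d : ℂ) ≠ 0 := Nat.cast_ne_zero.mpr hd
  rw [labelRoot, labelRoot, labelRoot, ← Complex.exp_add]
  congr 1
  push_cast [pow_add]
  field_simp

theorem labelRoot_add_pow : labelRoot d (k + d ^ n) n = labelRoot d k n := by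
  have hdn : (d : ℂ) ^ n ≠ 0 := pow_ne_zero _ (Nat.cast_ne_zero.mpr hd)
  have harg : 2 * Real.pi * Complex.I * ((k + d ^ n : ℕ) : ℂ) / (d : ℂ) ^ n
      = 2 * Real.pi * Complex.I * k / (d : ℂ) ^ n + 2 * Real.pi * Complex.I := by
    push_cast
    field_simp
  rw [labelRoot, labelRoot, harg, Complex.exp_add, Complex.exp_two_pi_mul_I, mul_one]

end labelRoot

section shift

variable (c : ℂ) (d : ℕ) (Q : ℂ[X])

theorem shift_add_of_pow_eq_one {n : ℕ} {ε : ℂ} (hε : ε ^ d ^ n = 1) (t : ℕ) (ζ : ℂ) :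
    shift c d Q (n + t) ε ζ = shift c d Q n ε ζ := by
  have htail : ∀ l, (ε * ζ) ^ d ^ (n + l) = ζ ^ d ^ (n + l) := fun l => by
    rw [mul_pow, pow_add, pow_mul, hε, one_pow, one_mul]
  simp [shift, sum_range_add, htail]

theorem shift_mul (n : ℕ) (ε ε' ζ : ℂ) :
    shift c d Q n (ε * ε') ζ = shift c d Q n ε' ζ + shift c d Q n ε (ε' * ζ) := by
  simp only [shift, ← sum_add_distrib, mul_assoc]
  exact sum_congr rfl fun l _ => by ring

theorem shift_one (n : ℕ) (ζ : ℂ) : shift c d Q n 1 ζ = 0 := by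
  simp [shift]

end shift

section deckMap

variable (c : ℂ) (d : ℕ) (Q : ℂ[X])

theorem deckMap_deckMap {n n' : ℕ} {ε ε' : ℂ} (hε : ε ^ d ^ n = 1) (hε' : ε' ^ d ^ n' = 1)
    (p : ℂ × ℂ) :
    deckMap c d Q n ε (deckMap c d Q n' ε' p) = deckMap c d Q (n + n') (ε * ε') p := by
  simp only [deckMap, shift_mul, ← shift_add_of_pow_eq_one c d Q hε n' (ε' * p.2),
    ← shift_add_of_pow_eq_one c d Q hε' n p.2, add_comm n' n, mul_assoc]
  congr 1
  ring

theorem deckMap_one (n : ℕ) : deckMap c d Q n 1 = id := by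
  ext p <;> simp [deckMap, shift_one]

theorem deckMap_inv_deckMap {n : ℕ} {ε : ℂ} (hε0 : ε ≠ 0) (hε : ε ^ d ^ n = 1)
    (p : ℂ × ℂ) : deckMap c d Q n ε⁻¹ (deckMap c d Q n ε p) = p := by
  rw [deckMap_deckMap c d Q (by rw [inv_pow, hε, inv_one]) hε, inv_mul_cancel₀ hε0,
    deckMap_one, id]

theorem mapsTo_deckMap (n : ℕ) {ε : ℂ} (hε : ‖ε‖ = 1) (r : ℝ) :
    Set.MapsTo (deckMap c d Q n ε) {p | r < ‖p.2‖} {p | r < ‖p.2‖} := fun p hp => by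
  simpa [deckMap, hε] using hp

theorem bijOn_deckMap {n : ℕ} (hd : d ≠ 0) {ε : ℂ} (hε : ε ^ d ^ n = 1) (r : ℝ) :
    Set.BijOn (deckMap c d Q n ε) {p | r < ‖p.2‖} {p | r < ‖p.2‖} := by
  have hε_inv : ε⁻¹ ^ d ^ n = 1 := by rw [inv_pow, hε, inv_one]
  have hnorm : ‖ε‖ = 1 := Complex.norm_eq_one_of_pow_eq_one hε (pow_ne_zero _ hd)
  have hε0 : ε ≠ 0 := norm_ne_zero_iff.mp (by simp [hnorm])
  refine Set.InvOn.bijOn ⟨fun p _ => deckMap_inv_deckMap c d Q hε0 hε p, fun p _ => ?_⟩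
    (mapsTo_deckMap c d Q n hnorm r) (mapsTo_deckMap c d Q n (by simp [hnorm]) r)
  simpa using deckMap_inv_deckMap c d Q (inv_ne_zero hε0) hε_inv p

theorem differentiable_deckMap (n : ℕ) (ε : ℂ) : Differentiable ℂ (deckMap c d Q n ε) := by
  unfold deckMap shift
  fun_prop

end deckMap

end DeckTransformation

end

open DeckTransformation in
theorem stmt13_general (d : ℕ) (hd : 2 ≤ d) (δ : ℂ) (Q : Polynomial ℂ)
    (gam : ℕ → ℕ → ℂ × ℂ → ℂ × ℂ)
    (hgam : ∀ (k n : ℕ) (p : ℂ × ℂ), gam k n p =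
      (p.1 + ((d : ℂ) / δ) * ∑ l ∈ Finset.range n, ((d : ℂ) / δ) ^ l *
          (Q.eval (p.2 ^ d ^ l) -
            Q.eval ((Complex.exp (2 * Real.pi * Complex.I * k / (d : ℂ) ^ n) * p.2) ^ d ^ l)),
        Complex.exp (2 * Real.pi * Complex.I * k / (d : ℂ) ^ n) * p.2)) :
    (∀ k n : ℕ, Set.BijOn (gam k n)
        {p : ℂ × ℂ | 1 < ‖p.2‖} {p : ℂ × ℂ | 1 < ‖p.2‖}) ∧
    (∀ k n : ℕ, DifferentiableOn ℂ (gam k n) {p : ℂ × ℂ | 1 < ‖p.2‖}) ∧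
    (∀ k n : ℕ, gam (k + d ^ n) n = gam k n) ∧
    (∀ k n k' n' : ℕ, ∀ p : ℂ × ℂ, 1 < ‖p.2‖ →
      gam k n (gam k' n' p) = gam (k * d ^ n' + k' * d ^ n) (n + n') p) := by
  have hd0 : d ≠ 0 := by omega
  obtain rfl : gam = fun k n => deckMap (d / δ) d Q n (labelRoot d k n) :=
    funext₂ fun k n => funext (hgam k n)
  refine ⟨fun k n => bijOn_deckMap _ d Q hd0 (labelRoot_pow_eq_one hd0 k n) 1,
    fun k n => (differentiable_deckMap _ d Q n _).differentiableOn,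
    fun k n => by simp only [labelRoot_add_pow hd0], fun k n k' n' p _ => ?_⟩
  beta_reduce
  rw [deckMap_deckMap _ d Q (labelRoot_pow_eq_one hd0 k n) (labelRoot_pow_eq_one hd0 k' n'),
    labelRoot_mul hd0]

/-- The deck transformations γ_{k/d^n} are biholomorphic self-maps of
    ℂ × (ℂ∖D̄), depend only on the class [k/d^n] ∈ Z[1/d]/ℤ, and compose
    according to addition of labels. -/
theorem stmt13 (d : ℕ) (hd : 2 ≤ d) (δ : ℂ) (hδ : δ ≠ 0) (Q : Polynomial ℂ)
    (hQ : Q.degree = (d + 1 : ℕ))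
    (gam : ℕ → ℕ → ℂ × ℂ → ℂ × ℂ)
    (hgam : ∀ (k n : ℕ) (p : ℂ × ℂ), gam k n p =
      (p.1 + ((d : ℂ) / δ) * ∑ l ∈ Finset.range n, ((d : ℂ) / δ) ^ l *
          (Q.eval (p.2 ^ d ^ l) -
            Q.eval ((Complex.exp (2 * Real.pi * Complex.I * k / (d : ℂ) ^ n) * p.2) ^ d ^ l)),
        Complex.exp (2 * Real.pi * Complex.I * k / (d : ℂ) ^ n) * p.2)) :
    (∀ k n : ℕ, Set.BijOn (gam k n)
        {p : ℂ × ℂ | 1 < ‖p.2‖} {p : ℂ × ℂ | 1 < ‖p.2‖}) ∧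
    (∀ k n : ℕ, DifferentiableOn ℂ (gam k n) {p : ℂ × ℂ | 1 < ‖p.2‖}) ∧
    (∀ k n : ℕ, gam (k + d ^ n) n = gam k n) ∧
    (∀ k n k' n' : ℕ, ∀ p : ℂ × ℂ, 1 < ‖p.2‖ →
      gam k n (gam k' n' p) = gam (k * d ^ n' + k' * d ^ n) (n + n') p) :=
  stmt13_general d hd δ Q gam hgam
end

section
/- Let d ≥ 2 and let H̃(z,ζ) = ((δ/d)z + Q(ζ), ζ^d). For every class [k/d^n] ∈ Z[1/d]/ℤ, H̃ ∘ γ_{k/d^n} = γ_{k/d^{n-1}} ∘ H̃ (for n ≥ 1), where γ are the deck transformations of the previous statement; i.e., conjugation by H̃ acts on the deck group Z[1/d]/ℤ as multiplication by d. -/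
/-! Writing `a = δ / d`, the first coordinate of `γ` is `z + a⁻¹ S` with
`S = ∑_{l<n} a⁻ˡ (Q(ζ^{dˡ}) - Q((ωζ)^{dˡ}))`. Peeling off the `l = 0` term of `S` for level `n + 1`
leaves `a⁻¹` times the same sum for level `n` evaluated at `(ζ^d, ω^d)`, and `ω^d` is exactly the
root of unity of level `n`; the `l = 0` term is absorbed by the `Q(ζ)` in `H̃`. -/

open Finset

theorem sum_range_succ_pow_sub_pow {R : Type*} [CommRing R] (f : R → R) (r : R) (d n : ℕ) (ω ζ : R) :
    ∑ l ∈ range (n + 1), r ^ l * (f (ζ ^ d ^ l) - f ((ω * ζ) ^ d ^ l)) =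
      (f ζ - f (ω * ζ)) +
        r * ∑ l ∈ range n, r ^ l * (f ((ζ ^ d) ^ d ^ l) - f ((ω ^ d * ζ ^ d) ^ d ^ l)) := by
  rw [sum_range_succ', mul_sum, add_comm]
  simp only [pow_zero, pow_one, one_mul, ← mul_pow, ← pow_mul, ← pow_succ']
  congr 1
  exact sum_congr rfl fun l _ => by ring

section SkewProduct

variable {K : Type*} [Field K]

/-- `H̃` for `a = δ / d` and `f = Q`. -/
def skewProduct (a : K) (f : K → K) (d : ℕ) (p : K × K) : K × K :=
  (a * p.1 + f p.2, p.2 ^ d)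

/-- `γ_{k/dⁿ}` for `a = δ / d`, `f = Q` and `ω = e^{2πik/dⁿ}`. -/
def deckMap (a : K) (f : K → K) (d n : ℕ) (ω : K) (p : K × K) : K × K :=
  (p.1 + a⁻¹ * ∑ l ∈ range n, a⁻¹ ^ l * (f (p.2 ^ d ^ l) - f ((ω * p.2) ^ d ^ l)), ω * p.2)

theorem skewProduct_deckMap_succ {a : K} (ha : a ≠ 0) (f : K → K) (d n : ℕ) (ω : K) (p : K × K) :
    skewProduct a f d (deckMap a f d (n + 1) ω p) =
      deckMap a f d n (ω ^ d) (skewProduct a f d p) := by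
  simp only [skewProduct, deckMap]
  rw [sum_range_succ_pow_sub_pow, mul_pow]
  congr 1
  field_simp
  ring

end SkewProduct

theorem exp_div_pow_succ_pow {d : ℕ} (hd : d ≠ 0) (c : ℂ) (m : ℕ) :
    Complex.exp (c / (d : ℂ) ^ (m + 1)) ^ d = Complex.exp (c / (d : ℂ) ^ m) := by
  rw [← Complex.exp_nat_mul, pow_succ]
  congr 1
  field_simp

theorem stmt14_general (d : ℕ) (hd : 2 ≤ d) (δ : ℂ) (hδ : δ ≠ 0) (Q : Polynomial ℂ)
    (Htil : ℂ × ℂ → ℂ × ℂ)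
    (hH : ∀ p : ℂ × ℂ, Htil p = ((δ / d) * p.1 + Q.eval p.2, p.2 ^ d))
    (gam : ℕ → ℕ → ℂ × ℂ → ℂ × ℂ)
    (hgam : ∀ (k n : ℕ) (p : ℂ × ℂ), gam k n p =
      (p.1 + ((d : ℂ) / δ) * ∑ l ∈ Finset.range n, ((d : ℂ) / δ) ^ l *
          (Q.eval (p.2 ^ d ^ l) -
            Q.eval ((Complex.exp (2 * Real.pi * Complex.I * k / (d : ℂ) ^ n) * p.2) ^ d ^ l)),
        Complex.exp (2 * Real.pi * Complex.I * k / (d : ℂ) ^ n) * p.2)) :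
    ∀ k n : ℕ, 1 ≤ n → ∀ p : ℂ × ℂ, 1 < ‖p.2‖ →
      Htil (gam k n p) = gam k (n - 1) (Htil p) := by
  intro k n hn p _
  obtain ⟨m, rfl⟩ : ∃ m, n = m + 1 := ⟨n - 1, by omega⟩
  have hd0 : d ≠ 0 := by omega
  have hH' : Htil = skewProduct (δ / d) Q.eval d := funext hH
  have hgam' : ∀ n, gam k n =
      deckMap (δ / d) Q.eval d n (Complex.exp (2 * Real.pi * Complex.I * k / (d : ℂ) ^ n)) := by
    intro n
    funext q
    rw [hgam, deckMap, inv_div]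
  rw [hH', hgam', hgam', Nat.add_sub_cancel, skewProduct_deckMap_succ (by simp [hδ, hd0]),
    exp_div_pow_succ_pow hd0]

/-- Conjugation by H̃ acts on the deck group as multiplication by d:
    H̃ ∘ γ_{k/d^n} = γ_{k/d^{n-1}} ∘ H̃ for n ≥ 1. -/
theorem stmt14 (d : ℕ) (hd : 2 ≤ d) (δ : ℂ) (hδ : δ ≠ 0) (Q : Polynomial ℂ)
    (hQ : Q.degree = (d + 1 : ℕ))
    (Htil : ℂ × ℂ → ℂ × ℂ)
    (hH : ∀ p : ℂ × ℂ, Htil p = ((δ / d) * p.1 + Q.eval p.2, p.2 ^ d))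
    (gam : ℕ → ℕ → ℂ × ℂ → ℂ × ℂ)
    (hgam : ∀ (k n : ℕ) (p : ℂ × ℂ), gam k n p =
      (p.1 + ((d : ℂ) / δ) * ∑ l ∈ Finset.range n, ((d : ℂ) / δ) ^ l *
          (Q.eval (p.2 ^ d ^ l) -
            Q.eval ((Complex.exp (2 * Real.pi * Complex.I * k / (d : ℂ) ^ n) * p.2) ^ d ^ l)),
        Complex.exp (2 * Real.pi * Complex.I * k / (d : ℂ) ^ n) * p.2)) :
    ∀ k n : ℕ, 1 ≤ n → ∀ p : ℂ × ℂ, 1 < ‖p.2‖ →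
      Htil (gam k n p) = gam k (n - 1) (Htil p) :=
  stmt14_general d hd δ hδ Q Htil hH gam hgam
end

section
/- Let d ≥ 2, α ∈ ℂ with α ≠ 0, and let p_H, p_F be monic centered degree-d complex polynomials. If the expansions of α·y·(p_H(y)/y^d)^{1/d} and α y·(p_F(αy)/(αy)^d)^{1/d} at infinity agree up to terms of order O(1/y^{d-1}), then a_{d-k}^F = α^k a_{d-k}^H for all 2 ≤ k ≤ d−1. -/
/-!
The hypothesis says that `gH` and `gF(u/α)` agree modulo `u^d`, hence so do their `d`-th powers.
The coefficient of `u^k` in `gH^d` is `a^H_{d-k}`, and in `gF(u/α)^d` it is `α^{-k} a^F_{d-k}`.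
-/

open PowerSeries

theorem PowerSeries.trunc_pow_eq_of_trunc_eq {R : Type*} [CommSemiring R] {f g : R⟦X⟧} {n : ℕ}
    (h : trunc n f = trunc n g) (a : ℕ) : trunc n (f ^ a) = trunc n (g ^ a) := by
  rw [← trunc_trunc_pow, h, trunc_trunc_pow]

theorem stmt18_general (d : ℕ) (α : ℂ) (hα : α ≠ 0)
    (aH aF : ℕ → ℂ) (gH gF : PowerSeries ℂ)
    (hgH : gH ^ d = PowerSeries.mk (fun j => if j = 0 then (1 : ℂ) else
      if 2 ≤ j ∧ j ≤ d then aH (d - j) else 0))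
    (hgF : gF ^ d = PowerSeries.mk (fun j => if j = 0 then (1 : ℂ) else
      if 2 ≤ j ∧ j ≤ d then aF (d - j) else 0))
    (hagree : ∀ j : ℕ, j ≤ d - 1 →
      PowerSeries.coeff j gH = α ^ (-(j : ℤ)) * PowerSeries.coeff j gF) :
    ∀ k : ℕ, 2 ≤ k → k ≤ d - 1 → aF (d - k) = α ^ k * aH (d - k) := by
  intro k hk2 hkd
  have htrunc : trunc d gH = trunc d (rescale α⁻¹ gF) := by
    ext j
    simp only [coeff_trunc, coeff_rescale]
    split_ifs with hj
    · rw [hagree j (by omega), zpow_neg, zpow_natCast, inv_pow]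
    · rfl
  have hcoeff := congrArg (Polynomial.coeff · k) (trunc_pow_eq_of_trunc_eq htrunc d)
  have hk : k < d := by omega
  simp only [coeff_trunc, if_pos hk, ← map_pow, coeff_rescale, hgH, hgF, coeff_mk,
    if_neg (show k ≠ 0 by omega), if_pos (show 2 ≤ k ∧ k ≤ d by omega)] at hcoeff
  rw [hcoeff, inv_pow, mul_inv_cancel_left₀ (pow_ne_zero k hα)]

/-- If the expansions at infinity of α·y·(p_H(y)/y^d)^{1/d} and
    αy·(p_F(αy)/(αy)^d)^{1/d} agree up to O(1/y^{d-1}), then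
    a_{d-k}^F = α^k a_{d-k}^H for 2 ≤ k ≤ d−1.  Encoded via the power series
    g_H, g_F (in u = 1/y) with g(0)=1 and g^d = u^d p(1/u); the agreement of the
    expansions up to O(1/y^{d-1}) translates into
    coeff_j g_H = α^{-j}·coeff_j g_F for j ≤ d−1. -/
theorem stmt18 (d : ℕ) (hd : 2 ≤ d) (α : ℂ) (hα : α ≠ 0)
    (aH aF : ℕ → ℂ) (gH gF : PowerSeries ℂ)
    (hgH0 : PowerSeries.coeff 0 gH = 1) (hgF0 : PowerSeries.coeff 0 gF = 1)
    (hgH : gH ^ d = PowerSeries.mk (fun j => if j = 0 then (1 : ℂ) else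
      if 2 ≤ j ∧ j ≤ d then aH (d - j) else 0))
    (hgF : gF ^ d = PowerSeries.mk (fun j => if j = 0 then (1 : ℂ) else
      if 2 ≤ j ∧ j ≤ d then aF (d - j) else 0))
    (hagree : ∀ j : ℕ, j ≤ d - 1 →
      PowerSeries.coeff j gH = α ^ (-(j : ℤ)) * PowerSeries.coeff j gF) :
    ∀ k : ℕ, 2 ≤ k → k ≤ d - 1 → aF (d - k) = α ^ k * aH (d - k) :=
  stmt18_general d α hα aH aF gH gF hgH hgF hagree
end
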